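/- Assume (F0)-(F5). Then for every t ∈ [0,T] and every u₁, u₂ ∈ X, the energy-dissipation cost dominates the energy gap: c_t(u₁, u₂) ≥ |F(t, u₁) − F(t, u₂)|. -/

import Mathlib

/-
Along an admissible path `v`, the chain rule gives `d/ds F(t, v) = ⟪∇F(t, v), v̇⟫`, which we
write as `⟪∇F(t, v) + A v̈, v̇⟫ - ⟪A v̈, v̇⟫`. Since `A` is symmetric, the second term integrates to
`½ ⟪A v̇, v̇⟫` evaluated between the endpoints, which vanishes because the end velocities are zero.
Young's inequality in the `B`-norm, `|⟪z, w⟫| ≤ ½ (‖z‖²_{B⁻¹} + ‖w‖²_B)`, then bounds the energy gap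
by the functional of every admissible path. The cost is an `sInf`, so we also need an admissible
path (a cubic from `u₁` to `u₂`) to rule out the junk value `sInf ∅ = 0`.
-/

open Set Filter Topology MeasureTheory
open scoped RealInnerProductSpace

noncomputable def cost {X : Type*} [NormedAddCommGroup X] [InnerProductSpace ℝ X]
    (A B Binv : X →L[ℝ] X) (gradF : ℝ → X → X) (t : ℝ) (u₁ u₂ : X) : ℝ :=
  sInf { c : ℝ | ∃ (N : ℕ) (v v' v'' : ℝ → X),
    -- v is C¹ on [-N,N] with derivative v'
    (∀ s ∈ Set.Icc (-(N : ℝ)) (N : ℝ),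
      HasDerivWithinAt v (v' s) (Set.Icc (-(N : ℝ)) (N : ℝ)) s) ∧
    ContinuousOn v' (Set.Icc (-(N : ℝ)) (N : ℝ)) ∧
    -- v' is absolutely continuous with (second) derivative v'' in L²
    MeasureTheory.IntegrableOn v'' (Set.Icc (-(N : ℝ)) (N : ℝ)) ∧
    MeasureTheory.IntegrableOn (fun s => ‖v'' s‖ ^ 2) (Set.Icc (-(N : ℝ)) (N : ℝ)) ∧
    (∀ s ∈ Set.Icc (-(N : ℝ)) (N : ℝ), v' s = v' (-(N : ℝ)) + ∫ r in (-(N : ℝ))..s, v'' r) ∧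
    -- boundary conditions
    v (-(N : ℝ)) = u₁ ∧ v (N : ℝ) = u₂ ∧ v' (-(N : ℝ)) = 0 ∧ v' (N : ℝ) = 0 ∧
    -- value of the functional
    c = (1 / 2) * ∫ s in (-(N : ℝ))..(N : ℝ),
      (⟪gradF t (v s) + A (v'' s), Binv (gradF t (v s) + A (v'' s))⟫
        + ⟪v' s, B (v' s)⟫) }

open scoped ENNReal

section

variable {X : Type*} [NormedAddCommGroup X] [InnerProductSpace ℝ X]

theorem abs_inner_le_half_inner_inv_add_inner {B Binv : X →L[ℝ] X}
    (hB : ∀ x y : X, ⟪B x, y⟫ = ⟪x, B y⟫) (hB_nonneg : ∀ x : X, 0 ≤ ⟪x, B x⟫)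
    (hBinv : ∀ x : X, B (Binv x) = x) (z w : X) :
    |⟪z, w⟫| ≤ 1 / 2 * (⟪z, Binv z⟫ + ⟪w, B w⟫) := by
  obtain ⟨y, rfl⟩ : ∃ y, B y = z := ⟨Binv z, hBinv z⟩
  have hyw : ⟪w, B y⟫ = ⟪y, B w⟫ := by rw [← hB, real_inner_comm]
  have expand (ε : ℝ) : ⟪y + ε • w, B (y + ε • w)⟫ =
      ⟪y, B y⟫ + 2 * ε * ⟪y, B w⟫ + ε ^ 2 * ⟪w, B w⟫ := by
    simp only [map_add, map_smul, inner_add_left, inner_add_right, inner_smul_left,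
      inner_smul_right, hyw, RCLike.conj_to_real]
    ring
  have hplus := (expand 1).symm.trans_ge (hB_nonneg _)
  have hminus := (expand (-1)).symm.trans_ge (hB_nonneg _)
  rw [hB y w, hB y (Binv (B y)), hBinv, abs_le]
  constructor <;> linarith

theorem MeasureTheory.MemLp.integrable_inner {α : Type*} [MeasurableSpace α] {μ : Measure α}
    {f g : α → X} (hf : MemLp f 2 μ) (hg : MemLp g 2 μ) :
    Integrable (fun x => ⟪f x, g x⟫) μ :=
  memLp_one_iff_integrable.1 ((innerSL ℝ).memLp_of_bilin 1 hf hg)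

theorem ContinuousOn.memLp_restrict_Icc {E : Type*} [NormedAddCommGroup E] {f : ℝ → E}
    {a b : ℝ} (hf : ContinuousOn f (Icc a b)) (p : ℝ≥0∞) :
    MemLp f p (volume.restrict (Icc a b)) :=
  let ⟨C, hC⟩ := isCompact_Icc.exists_bound_of_continuousOn hf
  .of_bound (hf.aestronglyMeasurable measurableSet_Icc) C
    (ae_restrict_of_forall_mem measurableSet_Icc hC)

theorem ae_fst_ne_snd (μ : Measure ℝ) [SFinite μ] [NullSingletonClass μ] :
    ∀ᵐ p ∂μ.prod μ, p.1 ≠ p.2 := by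
  simp only [ae_iff, not_not]
  rw [Measure.prod_apply (measurableSet_eq_fun measurable_fst measurable_snd)]
  simp [preimage, measure_singleton]

theorem integral_indicator_snd_le_fst_of_symmetric (μ : Measure ℝ) [SFinite μ]
    [NullSingletonClass μ] {k : ℝ × ℝ → ℝ} (hk : Integrable k (μ.prod μ))
    (hk_swap : ∀ p, k p.swap = k p) :
    ∫ p, {p : ℝ × ℝ | p.2 ≤ p.1}.indicator k p ∂μ.prod μ = 1 / 2 * ∫ p, k p ∂μ.prod μ := by
  set K := {p : ℝ × ℝ | p.2 ≤ p.1}.indicator k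
  have hK : Integrable K (μ.prod μ) := hk.indicator (measurableSet_le measurable_snd measurable_fst)
  have hK_swap : Integrable (fun p => K p.swap) (μ.prod μ) := hK.swap
  have hswap : ∫ p, K p.swap ∂μ.prod μ = ∫ p, K p ∂μ.prod μ := integral_prod_swap K
  have hhalves : ∫ p, K p ∂μ.prod μ + ∫ p, K p.swap ∂μ.prod μ = ∫ p, k p ∂μ.prod μ := by
    rw [← integral_add hK hK_swap]
    refine integral_congr_ae ?_
    filter_upwards [ae_fst_ne_snd μ] with p hp
    rcases hp.lt_or_gt with h | h
    · simp [K, h.le, not_le.2 h, hk_swap]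
    · simp [K, h.le, not_le.2 h]
  linarith

theorem MeasureTheory.Integrable.inner_apply_prod {α : Type*} [MeasurableSpace α]
    {μ : Measure α} [SFinite μ] (A : X →L[ℝ] X) {f : α → X} (hf : Integrable f μ) :
    Integrable (fun p : α × α => ⟪A (f p.1), f p.2⟫) (μ.prod μ) := by
  refine ((hf.norm.const_mul ‖A‖).mul_prod hf.norm).mono'
    (((A.continuous.comp_aestronglyMeasurable hf.1).comp_quasiMeasurePreserving
      Measure.quasiMeasurePreserving_fst).inner
      (hf.1.comp_quasiMeasurePreserving Measure.quasiMeasurePreserving_snd)) ?_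
  filter_upwards with p
  exact (abs_real_inner_le_norm _ _).trans
    (mul_le_mul_of_nonneg_right (A.le_opNorm _) (norm_nonneg _))

/- Integration by parts `∫ ⟪A w', w⟫ = ½ ⟪A w, w⟫` for `w = ∫ w'`; since `w` need not be
differentiable, it goes through Fubini on the square `(a, b]²`, split along the diagonal. -/
theorem integral_inner_apply_primitive [CompleteSpace X] {A : X →L[ℝ] X}
    (hA : ∀ x y : X, ⟪A x, y⟫ = ⟪x, A y⟫) {f : ℝ → X} {a b : ℝ} (hab : a ≤ b)
    (hf : IntervalIntegrable f volume a b) :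
    ∫ s in a..b, ⟪A (f s), ∫ r in a..s, f r⟫ =
      1 / 2 * ⟪A (∫ r in a..b, f r), ∫ r in a..b, f r⟫ := by
  set μ := volume.restrict (Ioc a b)
  replace hf : Integrable f μ := (intervalIntegrable_iff_integrableOn_Ioc_of_le hab).1 hf
  set k : ℝ × ℝ → ℝ := fun p => ⟪A (f p.1), f p.2⟫
  set K := {p : ℝ × ℝ | p.2 ≤ p.1}.indicator k
  have hk : Integrable k (μ.prod μ) := hf.inner_apply_prod A
  have hK : Integrable K (μ.prod μ) := hk.indicator (measurableSet_le measurable_snd measurable_fst)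
  have hk_swap (p : ℝ × ℝ) : k p.swap = k p := by
    simp only [k, Prod.fst_swap, Prod.snd_swap]
    rw [hA, real_inner_comm]
  have hslice : ∀ s ∈ Ioc a b, ⟪A (f s), ∫ r in a..s, f r⟫ = ∫ r, K (s, r) ∂μ := by
    intro s hs
    have hK_slice : (fun r => K (s, r)) = (Iic s).indicator (fun r => k (s, r)) := by
      ext r; simp [K, indicator]
    rw [intervalIntegral.integral_of_le hs.1.le, ← integral_inner
      (IntegrableOn.mono_set (μ := volume) hf (Ioc_subset_Ioc_right hs.2)), hK_slice,
      integral_indicator measurableSet_Iic, Measure.restrict_restrict measurableSet_Iic,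
      Iic_inter_Ioc_of_le hs.2]
  have htotal : ∫ p, k p ∂μ.prod μ = ⟪A (∫ r in a..b, f r), ∫ r in a..b, f r⟫ := by
    rw [← integral_integral (f := fun s r => k (s, r)) hk, intervalIntegral.integral_of_le hab]
    have hsymm (s : ℝ) : ⟪A (f s), ∫ r, f r ∂μ⟫ = ⟪A (∫ r, f r ∂μ), f s⟫ := by
      rw [hA, real_inner_comm]
    simp only [k, integral_inner hf, hsymm]
    rfl
  calc ∫ s in a..b, ⟪A (f s), ∫ r in a..s, f r⟫
      = ∫ s, ∫ r, K (s, r) ∂μ ∂μ := by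
        rw [intervalIntegral.integral_of_le hab]
        exact setIntegral_congr_fun measurableSet_Ioc hslice
    _ = ∫ p, K p ∂μ.prod μ := integral_integral hK
    _ = _ := by rw [integral_indicator_snd_le_fst_of_symmetric μ hk hk_swap, htotal]

theorem integral_inner_gradient_comp [CompleteSpace X] {f : X → ℝ} {G : X → X} (hG : Continuous G)
    (hfG : ∀ x, HasGradientAt f (G x) x) {v v' : ℝ → X} {a b : ℝ} (hab : a ≤ b)
    (hv : ∀ s ∈ Icc a b, HasDerivWithinAt v (v' s) (Icc a b) s)
    (hv' : ContinuousOn v' (Icc a b)) :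
    ∫ s in a..b, ⟪G (v s), v' s⟫ = f (v b) - f (v a) := by
  have hchain : ∀ s ∈ Icc a b,
      HasDerivWithinAt (fun s => f (v s)) ⟪G (v s), v' s⟫ (Icc a b) s := by
    intro s hs
    have h := (hfG (v s)).hasFDerivAt.comp_hasDerivWithinAt s (hv s hs)
    simp only [InnerProductSpace.toDual_apply_apply] at h
    exact h
  have hvc : ContinuousOn v (Icc a b) := fun s hs => (hv s hs).continuousWithinAt
  refine intervalIntegral.integral_eq_sub_of_hasDerivAt_of_le hab
    (fun s hs => (hchain s hs).continuousWithinAt)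
    (fun s hs => (hchain s (Ioo_subset_Icc_self hs)).hasDerivAt (Icc_mem_nhds hs.1 hs.2)) ?_
  exact ((hG.comp_continuousOn hvc).inner hv').intervalIntegrable_of_Icc hab

theorem abs_sub_le_half_integral_dissipation [CompleteSpace X] {A B Binv : X →L[ℝ] X}
    (hA : ∀ x y : X, ⟪A x, y⟫ = ⟪x, A y⟫) (hB : ∀ x y : X, ⟪B x, y⟫ = ⟪x, B y⟫)
    (hB_nonneg : ∀ x : X, 0 ≤ ⟪x, B x⟫) (hBinv : ∀ x : X, B (Binv x) = x)
    {f : X → ℝ} {G : X → X} (hG : Continuous G) (hfG : ∀ x, HasGradientAt f (G x) x)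
    {v v' v'' : ℝ → X} {a b : ℝ} (hab : a ≤ b)
    (hv : ∀ s ∈ Icc a b, HasDerivWithinAt v (v' s) (Icc a b) s)
    (hv' : ContinuousOn v' (Icc a b)) (hv'' : MemLp v'' 2 (volume.restrict (Icc a b)))
    (hv'_eq : ∀ s ∈ Icc a b, v' s = v' a + ∫ r in a..s, v'' r) (ha : v' a = 0) (hb : v' b = 0) :
    |f (v a) - f (v b)| ≤ 1 / 2 * ∫ s in a..b,
      (⟪G (v s) + A (v'' s), Binv (G (v s) + A (v'' s))⟫ + ⟪v' s, B (v' s)⟫) := by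
  have hII {φ : ℝ → ℝ} (hφ : Integrable φ (volume.restrict (Icc a b))) :
      IntervalIntegrable φ volume a b :=
    (intervalIntegrable_iff_integrableOn_Icc_of_le hab).2 hφ
  have hg : MemLp (fun s => G (v s)) 2 (volume.restrict (Icc a b)) :=
    (hG.comp_continuousOn fun s hs => (hv s hs).continuousWithinAt).memLp_restrict_Icc 2
  have hw : MemLp v' 2 (volume.restrict (Icc a b)) := hv'.memLp_restrict_Icc 2
  have hAv'' : MemLp (fun s => A (v'' s)) 2 (volume.restrict (Icc a b)) := A.comp_memLp' hv''
  have hz := hg.add hAv''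
  have hcross : ∫ s in a..b, ⟪A (v'' s), v' s⟫ = 0 := by
    have hv'_prim (s : ℝ) (hs : s ∈ Icc a b) : v' s = ∫ r in a..s, v'' r := by
      rw [hv'_eq s hs, ha, zero_add]
    have htotal : ∫ r in a..b, v'' r = 0 := (hv'_prim b ⟨hab, le_rfl⟩).symm.trans hb
    rw [intervalIntegral.integral_congr fun s hs => congrArg _ (hv'_prim s (uIcc_of_le hab ▸ hs)),
      integral_inner_apply_primitive hA hab
        ((intervalIntegrable_iff_integrableOn_Icc_of_le hab).2 (hv''.integrable one_le_two)),
      htotal, inner_zero_right, mul_zero]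
  have hpower : ∫ s in a..b, ⟪G (v s) + A (v'' s), v' s⟫ = f (v b) - f (v a) := by
    simp only [inner_add_left]
    rw [intervalIntegral.integral_add (hII (hg.integrable_inner hw))
      (hII (hAv''.integrable_inner hw)), integral_inner_gradient_comp hG hfG hab hv hv', hcross,
      add_zero]
  calc |f (v a) - f (v b)| = |∫ s in a..b, ⟪G (v s) + A (v'' s), v' s⟫| := by
        rw [hpower, abs_sub_comm]
    _ ≤ ∫ s in a..b, |⟪G (v s) + A (v'' s), v' s⟫| :=
        intervalIntegral.abs_integral_le_integral_abs hab
    _ ≤ ∫ s in a..b, 1 / 2 *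
          (⟪G (v s) + A (v'' s), Binv (G (v s) + A (v'' s))⟫ + ⟪v' s, B (v' s)⟫) :=
        intervalIntegral.integral_mono_on hab (hII (hz.integrable_inner hw).abs)
          (hII (((hz.integrable_inner (Binv.comp_memLp' hz)).add
            (hw.integrable_inner (B.comp_memLp' hw))).const_mul _))
          fun s _ => abs_inner_le_half_inner_inv_add_inner hB hB_nonneg hBinv _ _
    _ = _ := intervalIntegral.integral_const_mul _ _

theorem exists_cubic_path [CompleteSpace X] (u₁ u₂ : X) :
    ∃ v v' v'' : ℝ → X, (∀ s, HasDerivAt v (v' s) s) ∧ Continuous v' ∧ Continuous v'' ∧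
      (∀ s, v' s = v' (-1) + ∫ r in (-1)..s, v'' r) ∧
      v (-1) = u₁ ∧ v 1 = u₂ ∧ v' (-1) = 0 ∧ v' 1 = 0 := by
  have hp (s : ℝ) : HasDerivAt (fun s : ℝ => (-s ^ 3 + 3 * s + 2) / 4) ((3 - 3 * s ^ 2) / 4) s := by
    refine ((((hasDerivAt_pow 3 s).neg.add ((hasDerivAt_id' s).const_mul 3)).add_const 2).div_const
      4).congr_deriv ?_
    push_cast; ring
  refine ⟨fun s => u₁ + ((-s ^ 3 + 3 * s + 2) / 4) • (u₂ - u₁),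
    fun s => ((3 - 3 * s ^ 2) / 4) • (u₂ - u₁), fun s => (-(3 / 2) * s) • (u₂ - u₁),
    fun s => ((hp s).smul_const (u₂ - u₁)).const_add u₁, by fun_prop, by fun_prop, fun s => ?_,
    by norm_num, by norm_num, by norm_num, by norm_num⟩
  beta_reduce
  rw [intervalIntegral.integral_smul_const, intervalIntegral.integral_const_mul, integral_id,
    ← add_smul]
  congr 1
  ring

end

theorem cost_ge_energy_gap
    {X : Type*} [NormedAddCommGroup X] [InnerProductSpace ℝ X] [FiniteDimensional ℝ X]
    (A B Binv : X →L[ℝ] X)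
    (hAsymm : ∀ x y : X, ⟪A x, y⟫ = ⟪x, A y⟫)
    (hBsymm : ∀ x y : X, ⟪B x, y⟫ = ⟪x, B y⟫)
    (hBpos : ∀ x : X, x ≠ 0 → 0 < ⟪x, B x⟫)
    -- Binv is the inverse of B
    (hBinv₂ : ∀ x : X, B (Binv x) = x)
    (T : ℝ)
    (F : ℝ → X → ℝ) (gradF : ℝ → X → X)
    -- (F0)
    (hgradF : ∀ t ∈ Set.Icc 0 T, ∀ x : X, HasGradientAt (F t) (gradF t x) x)
    -- (F4)
    (hessF : ℝ → X → X →L[ℝ] X)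
    (hhessF : ∀ t ∈ Set.Icc 0 T, ∀ x : X, HasFDerivAt (gradF t) (hessF t x) x)
    (t : ℝ) (ht : t ∈ Set.Icc 0 T) (u₁ u₂ : X) :
    |F t u₁ - F t u₂| ≤ cost A B Binv gradF t u₁ u₂ := by
  have hB_nonneg (x : X) : 0 ≤ ⟪x, B x⟫ := by
    rcases eq_or_ne x 0 with rfl | hx
    · simp
    · exact (hBpos x hx).le
  have hG : Continuous (gradF t) :=
    continuous_iff_continuousAt.2 fun x => (hhessF t ht x).differentiableAt.continuousAt
  refine le_csInf ?_ ?_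
  · obtain ⟨v, v', v'', hv, hv', hv'', hv'_eq, h₁, h₂, h₁', h₂'⟩ := exists_cubic_path u₁ u₂
    refine ⟨_, 1, v, v', v'', fun s _ => (hv s).hasDerivWithinAt, hv'.continuousOn,
      hv''.integrableOn_Icc, (hv''.norm.pow 2).integrableOn_Icc, fun s _ => ?_,
      by simpa using h₁, by simpa using h₂, by simpa using h₁', by simpa using h₂', rfl⟩
    simpa using hv'_eq s
  · rintro c ⟨N, v, v', v'', hv, hv', hv''_int, hv''_sq, hv'_eq, rfl, rfl, ha, hb, rfl⟩
    exact abs_sub_le_half_integral_dissipation hAsymm hBsymm hB_nonneg hBinv₂ hG (hgradF t ht)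
      (neg_le_self N.cast_nonneg) hv hv' ((memLp_two_iff_integrable_sq_norm hv''_int.1).2 hv''_sq)
      hv'_eq ha hb
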